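/- arXiv:1512.03168 — 3 statements merged into one kernel-verified Lean document; each statement's English description precedes it below -/
import Mathlib

section
/- Let G be a finite group and ρ: G → GL(V) an irreducible complex representation whose character takes all of its values in ℚ. Then there exist a representation τ: G → GL(W) of G over ℚ and a positive integer s such that W ⊗_ℚ ℂ ≅ V^{⊕s} as complex representations of G. -/
/-!
Let `n = dim V` and `e(g) = (n / |G|) χ(g⁻¹)`, a function with rational values. By Schur's lemma,
`∑_g tr (ρ(g⁻¹) T) ρ(g) = (|G| / n) T`, so `T ↦ (h ↦ (n / |G|) tr (ρ(h⁻¹) T))` embeds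
`End V ≅ V^n` equivariantly into the left regular representation `ℂ^G`, and its image is the
image of right convolution by `e`. As `e` is rational, this convolution is the complexification
of right convolution by `e` on `ℚ^G`, and by flatness the complexification of the image of the
latter, a rational representation, is the image of the former.
-/

open scoped TensorProduct

namespace Paper

variable {k : Type*} [Field k] {G : Type*} [Group G]

section Defs

variable {V W : Type*} [AddCommGroup V] [Module k V] [AddCommGroup W] [Module k W]

/-- `U ⊆ V` is a subrepresentation of `ρ`. -/
def IsSubrep (ρ : Representation k G V) (U : Submodule k V) : Prop :=
  ∀ g : G, ∀ v ∈ U, ρ g v ∈ U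

/-- A representation is irreducible if it is nonzero and its only subrepresentations
are `⊥` and `⊤`. -/
def IsIrred (ρ : Representation k G V) : Prop :=
  (∃ v : V, v ≠ 0) ∧ ∀ U : Submodule k V, IsSubrep ρ U → U = ⊥ ∨ U = ⊤

/-- Isomorphism of representations. -/
def RepIso (ρ : Representation k G V) (π : Representation k G W) : Prop :=
  ∃ e : V ≃ₗ[k] W, ∀ (g : G) (v : V), e (ρ g v) = π g (e v)

/-- `ρ` occurs (with positive multiplicity) in `π`: there is a nonzero equivariant map. -/
def Occurs (ρ : Representation k G V) (π : Representation k G W) : Prop :=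
  ∃ f : V →ₗ[k] W, f ≠ 0 ∧ ∀ (g : G) (v : V), f (ρ g v) = π g (f v)

/-- The character of a representation. -/
noncomputable def char (ρ : Representation k G V) : G → k :=
  fun g => LinearMap.trace k V (ρ g)

/-- The space of equivariant linear maps between two representations. -/
def repHom (ρ : Representation k G V) (π : Representation k G W) :
    Submodule k (V →ₗ[k] W) where
  carrier := {f | ∀ (g : G) (v : V), f (ρ g v) = π g (f v)}
  add_mem' := by
    intro f₁ f₂ h₁ h₂ g v
    simp [h₁ g v, h₂ g v]
  zero_mem' := by intro g v; simp
  smul_mem' := by intro c f hf g v; simp [hf g v]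

/-- The multiplicity of an irreducible complex representation `ρ` in `π`,
as the dimension of the space of equivariant maps. -/
noncomputable def mult (ρ : Representation k G V) (π : Representation k G W) : ℕ :=
  Module.finrank k (repHom ρ π)

/-- The direct sum of a family of representations. -/
def piRep {ι : Type*} {Vi : ι → Type*} [∀ i, AddCommGroup (Vi i)] [∀ i, Module k (Vi i)]
    (ρ : ∀ i, Representation k G (Vi i)) : Representation k G (∀ i, Vi i) where
  toFun g := LinearMap.pi fun i => (ρ i g).comp (LinearMap.proj i)
  map_one' := by
    refine LinearMap.ext fun v => funext fun i => ?_
    simp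
  map_mul' g h := by
    refine LinearMap.ext fun v => funext fun i => ?_
    simp

/-- The direct sum of two representations. -/
def prodRep (ρ : Representation k G V) (π : Representation k G W) :
    Representation k G (V × W) where
  toFun g := (ρ g).prodMap (π g)
  map_one' := by
    refine LinearMap.ext fun v => ?_
    simp
  map_mul' g h := by
    refine LinearMap.ext fun v => ?_
    simp

/-- The restriction of a representation to a subrepresentation. -/
def subRep (ρ : Representation k G V) (U : Submodule k V) (hU : IsSubrep ρ U) :
    Representation k G U where
  toFun g := (ρ g).restrict (hU g)
  map_one' := by
    refine LinearMap.ext fun v => Subtype.ext ?_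
    simp [LinearMap.restrict_apply]
  map_mul' g h := by
    refine LinearMap.ext fun v => Subtype.ext ?_
    simp [LinearMap.restrict_apply]

end Defs

section Complexify

variable {W : Type*} [AddCommGroup W] [Module ℚ W]

/-- The complexification of a rational representation. -/
noncomputable def complexify (τ : Representation ℚ G W) :
    Representation ℂ G (ℂ ⊗[ℚ] W) where
  toFun g := LinearMap.baseChange ℂ (τ g)
  map_one' := by
    simp only [map_one, LinearMap.baseChange_one]
  map_mul' g h := by
    simp only [map_mul, LinearMap.baseChange_mul]

end Complexify

section Mat

variable {n : ℕ}

/-- The representation on `Fin n → ℂ` attached to a matrix representation. -/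
noncomputable def matRep (ρ : G →* Matrix.GeneralLinearGroup (Fin n) ℂ) :
    Representation ℂ G (Fin n → ℂ) where
  toFun g := Matrix.toLin' (ρ g)
  map_one' := by simp [Module.End.one_eq_id]
  map_mul' g h := by
    simp [Matrix.toLin'_mul, Module.End.mul_eq_comp]

/-- The matrix representation obtained by applying a field embedding `σ` to all
matrix coefficients. -/
def twist (σ : ℂ →+* ℂ) (ρ : G →* Matrix.GeneralLinearGroup (Fin n) ℂ) :
    G →* Matrix.GeneralLinearGroup (Fin n) ℂ :=
  (Units.map (σ.mapMatrix).toMonoidHom).comp ρ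

end Mat

/-- Bundled finite-dimensional complex representations of `G`. -/
structure CxRep (G : Type*) [Group G] where
  carrier : Type
  [isAddCommGroup : AddCommGroup carrier]
  [isModule : Module ℂ carrier]
  [isFD : FiniteDimensional ℂ carrier]
  rep : Representation ℂ G carrier

attribute [instance] CxRep.isAddCommGroup CxRep.isModule CxRep.isFD

/-- Bundled finite-dimensional rational representations of `G`. -/
structure QRep (G : Type*) [Group G] where
  carrier : Type
  [isAddCommGroup : AddCommGroup carrier]
  [isModule : Module ℚ carrier]
  [isFD : FiniteDimensional ℚ carrier]
  rep : Representation ℚ G carrier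

attribute [instance] QRep.isAddCommGroup QRep.isModule QRep.isFD

section Fix

variable {V W : Type*} [AddCommGroup V] [Module k V] [AddCommGroup W] [Module k W]

/-- The subspace of vectors fixed by a subgroup `H`. -/
def fixSub (ρ : Representation k G V) (H : Subgroup G) : Submodule k V where
  carrier := {v | ∀ h ∈ H, ρ h v = v}
  add_mem' := by
    intro a b ha hb h hh
    simp [ha h hh, hb h hh]
  zero_mem' := by intro h hh; simp
  smul_mem' := by intro c v hv h hh; simp [hv h hh]

/-- For a normal subgroup `H`, the fixed subspace `V^H` is a `G`-subrepresentation. -/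
theorem fixSub_isSubrep (ρ : Representation k G V) (H : Subgroup G) [hN : H.Normal] :
    IsSubrep ρ (fixSub ρ H) := by
  intro g v hv h hh
  have h1 : g⁻¹ * h * g ∈ H := by
    simpa using hN.conj_mem h hh g⁻¹
  have h2 : ρ h (ρ g v) = ρ g (ρ (g⁻¹ * h * g) v) := by
    rw [← Module.End.mul_apply, ← map_mul, ← Module.End.mul_apply, ← map_mul]
    group
  rw [h2, hv _ h1]

/-- The representation of `G` on the fixed subspace of a normal subgroup. -/
def fixRep (ρ : Representation k G V) (H : Subgroup G) [H.Normal] :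
    Representation k G (fixSub ρ H) :=
  subRep ρ (fixSub ρ H) (fixSub_isSubrep ρ H)

end Fix

open Module

section RepIso

variable {V₁ V₂ V₃ : Type*} [AddCommGroup V₁] [Module k V₁] [AddCommGroup V₂] [Module k V₂]
  [AddCommGroup V₃] [Module k V₃]
  {ρ₁ : Representation k G V₁} {ρ₂ : Representation k G V₂} {ρ₃ : Representation k G V₃}

theorem RepIso.trans (h₁₂ : RepIso ρ₁ ρ₂) (h₂₃ : RepIso ρ₂ ρ₃) : RepIso ρ₁ ρ₃ := by
  obtain ⟨e₁, he₁⟩ := h₁₂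
  obtain ⟨e₂, he₂⟩ := h₂₃
  exact ⟨e₁.trans e₂, fun g v => by simp only [LinearEquiv.trans_apply, he₁, he₂]⟩

theorem repIso_of_injective_of_range_eq {W : Type*} [AddCommGroup W] [Module k W]
    {π : Representation k G W} {f₁ : V₁ →ₗ[k] W} {f₂ : V₂ →ₗ[k] W}
    (hf₁ : Function.Injective f₁) (hf₂ : Function.Injective f₂)
    (hrange : LinearMap.range f₁ = LinearMap.range f₂)
    (hρ₁ : ∀ g v, f₁ (ρ₁ g v) = π g (f₁ v)) (hρ₂ : ∀ g v, f₂ (ρ₂ g v) = π g (f₂ v)) :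
    RepIso ρ₁ ρ₂ := by
  let e : V₁ ≃ₗ[k] V₂ := (LinearEquiv.ofInjective f₁ hf₁).trans
    ((LinearEquiv.ofEq _ _ hrange).trans (LinearEquiv.ofInjective f₂ hf₂).symm)
  have he : ∀ v, f₂ (e v) = f₁ v := fun v => by
    simp [e, LinearEquiv.ofInjective_symm_apply]
  exact ⟨e, fun g v => hf₂ (by rw [he, hρ₂, he, hρ₁])⟩

end RepIso

section Transport

variable {W₁ W₂ : Type*} [AddCommGroup W₁] [Module ℚ W₁] [AddCommGroup W₂] [Module ℚ W₂]

theorem RepIso.complexify {τ₁ : Representation ℚ G W₁} {τ₂ : Representation ℚ G W₂}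
    (h : RepIso τ₁ τ₂) : RepIso (complexify τ₁) (complexify τ₂) := by
  obtain ⟨e, he⟩ := h
  refine ⟨LinearEquiv.baseChange ℚ ℂ _ _ e, fun g x => ?_⟩
  have hcomp : (e : W₁ →ₗ[ℚ] W₂) ∘ₗ τ₁ g = τ₂ g ∘ₗ e := LinearMap.ext (he g)
  change ((e : W₁ →ₗ[ℚ] W₂).baseChange ℂ ∘ₗ (τ₁ g).baseChange ℂ) x =
    ((τ₂ g).baseChange ℂ ∘ₗ (e : W₁ →ₗ[ℚ] W₂).baseChange ℂ) x
  rw [← LinearMap.baseChange_comp, ← LinearMap.baseChange_comp, hcomp]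

def transportRep (τ : Representation ℚ G W₁) (e : W₁ ≃ₗ[ℚ] W₂) : Representation ℚ G W₂ :=
  (e.conjAlgEquiv ℚ).toMonoidHom.comp τ

theorem repIso_transportRep (τ : Representation ℚ G W₁) (e : W₁ ≃ₗ[ℚ] W₂) :
    RepIso (transportRep τ e) τ :=
  ⟨e.symm, fun g v => by simp [transportRep]⟩

end Transport

section Regular

variable (k G) in
def regRep : Representation k G (G → k) where
  toFun g := LinearMap.funLeft k k (g⁻¹ * ·)
  map_one' := by ext a x; simp [LinearMap.funLeft]
  map_mul' g h := by ext a x; simp [LinearMap.funLeft, mul_assoc]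

@[simp]
theorem regRep_apply (g : G) (a : G → k) (x : G) : regRep k G g a x = a (g⁻¹ * x) := rfl

variable [Fintype G]

def rightConv (b : G → k) : (G → k) →ₗ[k] (G → k) where
  toFun a h := ∑ g : G, a g * b (g⁻¹ * h)
  map_add' a a' := by ext h; simp [add_mul, Finset.sum_add_distrib]
  map_smul' c a := by ext h; simp [Finset.mul_sum, mul_assoc]

theorem rightConv_apply (b a : G → k) (h : G) :
    rightConv b a h = ∑ g : G, a g * b (g⁻¹ * h) := rfl

theorem rightConv_regRep (b : G → k) (g : G) (a : G → k) :
    rightConv b (regRep k G g a) = regRep k G g (rightConv b a) := by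
  ext h
  simp only [rightConv_apply, regRep_apply]
  exact Fintype.sum_equiv (Equiv.mulLeft g⁻¹) _ _ fun x => by simp [mul_assoc]

theorem isSubrep_range_rightConv (b : G → k) :
    IsSubrep (regRep k G) (LinearMap.range (rightConv b)) := by
  rintro g _ ⟨a, rfl⟩
  exact ⟨regRep k G g a, rightConv_regRep b g a⟩

end Regular

section Coefficients

variable [Fintype G] {V : Type*} [AddCommGroup V] [Module k V] (ρ : Representation k G V)

def linExt : (G → k) →ₗ[k] Module.End k V where
  toFun a := ∑ g : G, a g • ρ g
  map_add' a a' := by simp [add_smul, Finset.sum_add_distrib]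
  map_smul' c a := by simp [smul_smul, Finset.smul_sum]

theorem linExt_apply (a : G → k) : linExt ρ a = ∑ g : G, a g • ρ g := rfl

noncomputable def coeffMap : Module.End k V →ₗ[k] (G → k) where
  toFun T h := (finrank k V / Fintype.card G : k) * LinearMap.trace k V (ρ h⁻¹ * T)
  map_add' T T' := by ext h; simp [mul_add]
  map_smul' c T := by ext h; simp [mul_left_comm]

theorem coeffMap_apply (T : Module.End k V) (h : G) :
    coeffMap ρ T h = (finrank k V / Fintype.card G : k) * LinearMap.trace k V (ρ h⁻¹ * T) := rfl

theorem coeffMap_mul (g : G) (T : Module.End k V) :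
    coeffMap ρ (ρ g * T) = regRep k G g (coeffMap ρ T) := by
  ext h
  simp only [coeffMap_apply, regRep_apply, ← mul_assoc, ← map_mul, mul_inv_rev, inv_inv]

theorem coeffMap_linExt (a : G → k) : coeffMap ρ (linExt ρ a) = rightConv (coeffMap ρ 1) a := by
  ext h
  simp only [coeffMap_apply, rightConv_apply, linExt_apply, Finset.mul_sum, map_sum, mul_smul_comm,
    map_smul, smul_eq_mul, mul_one, ← map_mul, mul_inv_rev, inv_inv]
  exact Finset.sum_congr rfl fun g _ => by ring

end Coefficients

section Schur

variable {V : Type*} [AddCommGroup V] [Module k V] {ρ : Representation k G V}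

theorem IsIrred.nontrivial (hρ : IsIrred ρ) : Nontrivial V :=
  let ⟨v, hv⟩ := hρ.1
  nontrivial_of_ne v 0 hv

variable [FiniteDimensional k V] [IsAlgClosed k]

theorem IsIrred.eq_smul_one_of_commute (hρ : IsIrred ρ) (T : Module.End k V)
    (hT : ∀ g : G, ρ g * T = T * ρ g) : ∃ c : k, T = c • 1 := by
  have := hρ.nontrivial
  obtain ⟨c, hc⟩ := Module.End.exists_eigenvalue T
  have hsub : IsSubrep ρ (T.eigenspace c) := fun g v hv => by
    rw [Module.End.mem_eigenspace_iff] at hv ⊢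
    rw [← Module.End.mul_apply, ← hT g, Module.End.mul_apply, hv, map_smul]
  have htop : T.eigenspace c = ⊤ :=
    (hρ.2 _ hsub).resolve_left (Module.End.hasEigenvalue_iff.1 hc)
  exact ⟨c, LinearMap.ext fun v =>
    Module.End.mem_eigenspace_iff.1 (htop ▸ Submodule.mem_top : v ∈ T.eigenspace c)⟩

variable [CharZero k] [Fintype G]

theorem IsIrred.sum_conj (hρ : IsIrred ρ) (E : Module.End k V) :
    ∑ g : G, ρ g * E * ρ g⁻¹ = (Fintype.card G / finrank k V * LinearMap.trace k V E : k) • 1 := by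
  have := hρ.nontrivial
  set S := ∑ g : G, ρ g * E * ρ g⁻¹
  obtain ⟨c, hc⟩ := hρ.eq_smul_one_of_commute S fun h => by
    simp only [S, Finset.mul_sum, Finset.sum_mul]
    refine Fintype.sum_equiv (Equiv.mulLeft h) _ _ fun g => ?_
    rw [Equiv.coe_mulLeft, ← mul_assoc, ← mul_assoc, ← map_mul, mul_assoc _ (ρ _), ← map_mul,
      mul_inv_rev, inv_mul_cancel_right]
  have htrace : c * finrank k V = Fintype.card G * LinearMap.trace k V E := by
    have hconj : ∀ g : G, LinearMap.trace k V (ρ g * E * ρ g⁻¹) = LinearMap.trace k V E :=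
      fun g => by rw [LinearMap.trace_mul_cycle, ← map_mul, inv_mul_cancel, map_one, one_mul]
    have := congrArg (LinearMap.trace k V) hc
    rwa [map_sum, Finset.sum_congr rfl fun g _ => hconj g, Finset.sum_const, Finset.card_univ,
      nsmul_eq_mul, map_smul, LinearMap.trace_one, smul_eq_mul, eq_comm] at this
  have hn : (finrank k V : k) ≠ 0 := Nat.cast_ne_zero.2 finrank_pos.ne'
  rw [hc, div_mul_eq_mul_div, ← htrace, mul_div_cancel_right₀ _ hn]

theorem IsIrred.sum_trace_smul (hρ : IsIrred ρ) (T : Module.End k V) :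
    ∑ g : G, LinearMap.trace k V (ρ g⁻¹ * T) • ρ g = (Fintype.card G / finrank k V : k) • T := by
  obtain ⟨t, rfl⟩ := (dualTensorHom_bijective (R := k) (M := V) (N := V)).2 T
  induction t using TensorProduct.induction_on with
  | zero => simp
  | add x y hx hy =>
    simp only [map_add, mul_add, add_smul, Finset.sum_add_distrib, smul_add, hx, hy]
  | tmul f w =>
    -- for the rank-one map `f(·) w`, the value at `x` is `sum_conj` for `f(·) x` evaluated at `w`
    have hT : dualTensorHom k V V (f ⊗ₜ w) = f.smulRight w := rfl
    have htrace : ∀ g : G, LinearMap.trace k V (ρ g⁻¹ * f.smulRight w) = f (ρ g⁻¹ w) := fun g => by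
      rw [show ρ g⁻¹ * f.smulRight w = f.smulRight (ρ g⁻¹ w) from LinearMap.ext fun _ => by simp,
        LinearMap.trace_smulRight]
    ext x
    have hE := congrArg (· w) (hρ.sum_conj (f.smulRight x))
    simp only [LinearMap.trace_smulRight, LinearMap.sum_apply, Module.End.mul_apply,
      LinearMap.smulRight_apply, map_smul, LinearMap.smul_apply, Module.End.one_apply] at hE
    simp only [hT, htrace, LinearMap.sum_apply, LinearMap.smul_apply, LinearMap.smulRight_apply,
      smul_smul, hE]

theorem IsIrred.linExt_coeffMap (hρ : IsIrred ρ) (T : Module.End k V) :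
    linExt ρ (coeffMap ρ T) = T := by
  have := hρ.nontrivial
  have hn : (finrank k V : k) ≠ 0 := Nat.cast_ne_zero.2 finrank_pos.ne'
  have hG : (Fintype.card G : k) ≠ 0 := Nat.cast_ne_zero.2 Fintype.card_ne_zero
  simp only [linExt_apply, coeffMap_apply, ← smul_smul, ← Finset.smul_sum, hρ.sum_trace_smul]
  rw [smul_smul, div_mul_div_cancel₀ hG, div_self hn, one_smul]

end Schur

section Irreducible

variable [Fintype G] [IsAlgClosed k] [CharZero k] {V : Type*} [AddCommGroup V] [Module k V]
  [FiniteDimensional k V] {ρ : Representation k G V}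

theorem IsIrred.injective_coeffMap (hρ : IsIrred ρ) : Function.Injective (coeffMap ρ) :=
  Function.LeftInverse.injective hρ.linExt_coeffMap

theorem IsIrred.range_rightConv_coeffMap_one (hρ : IsIrred ρ) :
    LinearMap.range (rightConv (coeffMap ρ 1)) = LinearMap.range (coeffMap ρ) := by
  rw [show rightConv (coeffMap ρ 1) = coeffMap ρ ∘ₗ linExt ρ from
    LinearMap.ext fun a => (coeffMap_linExt ρ a).symm]
  exact LinearMap.range_comp_of_range_eq_top _
    (LinearMap.range_eq_top.2 (Function.LeftInverse.surjective hρ.linExt_coeffMap))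

end Irreducible

section EndRep

variable {V : Type*} [AddCommGroup V] [Module k V] (ρ : Representation k G V)

def endRep : Representation k G (Module.End k V) where
  toFun g := LinearMap.mulLeft k (ρ g)
  map_one' := by rw [map_one, LinearMap.mulLeft_one]; rfl
  map_mul' g h := by rw [map_mul, LinearMap.mulLeft_mul]; rfl

theorem repIso_endRep_pi [FiniteDimensional k V] :
    RepIso (endRep ρ) (piRep fun _ : Fin (finrank k V) => ρ) :=
  ⟨((finBasis k V).constr k).symm, fun _ _ => rfl⟩

end EndRep

section Descent

variable {ι : Type*}

noncomputable def complexifyIncl (U : Submodule ℚ (ι → ℚ)) : ℂ ⊗[ℚ] U →ₗ[ℂ] (ι → ℂ) :=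
  TensorProduct.piScalarRightHom ℚ ℂ ℂ ι ∘ₗ U.subtype.baseChange ℂ

theorem complexifyIncl_tmul (U : Submodule ℚ (ι → ℚ)) (c : ℂ) (u : U) :
    complexifyIncl U (c ⊗ₜ u) = fun x => (u : ι → ℚ) x • c := by
  simp [complexifyIncl]

theorem complexifyIncl_injective [Fintype ι] (U : Submodule ℚ (ι → ℚ)) :
    Function.Injective (complexifyIncl U) := by
  classical
  refine (TensorProduct.piScalarRight ℚ ℂ ℂ ι).injective.comp ?_
  rw [LinearMap.baseChange_eq_ltensor]
  exact Module.Flat.lTensor_preserves_injective_linearMap _ U.injective_subtype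

theorem complexifyIncl_complexify (U : Submodule ℚ (G → ℚ)) (hU : IsSubrep (regRep ℚ G) U)
    (g : G) (x : ℂ ⊗[ℚ] U) :
    complexifyIncl U (complexify (subRep (regRep ℚ G) U hU) g x) =
      regRep ℂ G g (complexifyIncl U x) := by
  induction x using TensorProduct.induction_on with
  | zero => simp
  | tmul c u =>
    rw [show complexify _ g (c ⊗ₜ u) = c ⊗ₜ (subRep _ U hU g u) from rfl, complexifyIncl_tmul,
      complexifyIncl_tmul]
    rfl
  | add x y hx hy => simp only [map_add, hx, hy]

theorem range_complexifyIncl_rightConv [Fintype G] (b : G → ℚ) :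
    LinearMap.range (complexifyIncl (LinearMap.range (rightConv b))) =
      LinearMap.range (rightConv fun x => (b x : ℂ)) := by
  classical
  set e := TensorProduct.piScalarRight ℚ ℂ ℂ G
  have hsub : LinearMap.range ((LinearMap.range (rightConv b)).subtype.baseChange ℂ) =
      LinearMap.range ((rightConv b).baseChange ℂ) := by
    rw [← LinearMap.range_comp_of_range_eq_top _ (LinearMap.range_eq_top.2
      (LinearMap.baseChange_surjective ℂ (rightConv b).surjective_rangeRestrict)),
      ← LinearMap.baseChange_comp, LinearMap.subtype_comp_codRestrict]
  have hconv : e.toLinearMap ∘ₗ (rightConv b).baseChange ℂ =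
      rightConv (fun x => (b x : ℂ)) ∘ₗ e.toLinearMap := by
    refine LinearMap.ext fun x => ?_
    induction x using TensorProduct.induction_on with
    | zero => simp
    | tmul c a =>
      ext h
      simp [e, rightConv_apply, Rat.smul_def, Finset.sum_mul, mul_right_comm]
    | add x y hx hy => simp only [map_add, hx, hy]
  rw [show complexifyIncl _ = e.toLinearMap ∘ₗ _ from rfl, LinearMap.range_comp, hsub,
    ← LinearMap.range_comp, hconv, LinearMap.range_comp_of_range_eq_top _ e.range]

end Descent

/-- an irreducible complex representation with rational character values is,
up to a multiplicity `s`, the complexification of a rational representation. -/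
theorem statement_4 {G : Type*} [Group G] [Fintype G]
    {V : Type*} [AddCommGroup V] [Module ℂ V] [FiniteDimensional ℂ V]
    (ρ : Representation ℂ G V) (hρ : IsIrred ρ)
    (hrat : ∀ g : G, ∃ q : ℚ, char ρ g = (q : ℂ)) :
    ∃ (R : QRep G) (s : ℕ), 0 < s ∧
      RepIso (complexify R.rep) (piRep fun _ : Fin s => ρ) := by
  have hn : 0 < finrank ℂ V := haveI := hρ.nontrivial; finrank_pos
  choose q hq using hrat
  set b : G → ℚ := fun x => (finrank ℂ V / Fintype.card G : ℚ) * q x⁻¹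
  have hb : (fun x => (b x : ℂ)) = coeffMap ρ 1 := funext fun x => by
    simp [b, coeffMap_apply, ← hq, char]
  set W := LinearMap.range (rightConv b)
  set τ := subRep (regRep ℚ G) W (isSubrep_range_rightConv b)
  have hτ : RepIso (complexify τ) (endRep ρ) :=
    repIso_of_injective_of_range_eq (complexifyIncl_injective W) hρ.injective_coeffMap
      (by rw [range_complexifyIncl_rightConv, hb, hρ.range_rightConv_coeffMap_one])
      (complexifyIncl_complexify W _) (coeffMap_mul ρ)
  -- the carrier of a `QRep` lives in `Type`, so `W` is moved to `Fin _ → ℚ`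
  let e := (finBasis ℚ W).equivFun
  exact ⟨⟨_, transportRep τ e⟩, _, hn,
    (repIso_transportRep τ e).complexify.trans (hτ.trans (repIso_endRep_pi ρ))⟩

end Paper
end

section
/- Let G be a finite group and W an irreducible representation of G over ℚ whose complexification decomposes as W ⊗_ℚ ℂ ≅ ⊕_{i∈I} ρ_i^{⊕s}, where the ρ_i are pairwise non-isomorphic irreducible complex representations, each of the same dimension d, and s is a positive integer. Set 𝔻 = End_G(W), a division algebra over ℚ, and regard W as a left 𝔻-vector space. Then dim_𝔻 W = d/s; in particular, s divides d. -/
open scoped TensorProduct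

namespace Paper

variable {k : Type*} [Field k] {G : Type*} [Group G]

/-!
The commutant `𝔻` of `τ` is a division ring by Schur's lemma, and as a `ℚ`-space it is the space
of `G`-endomorphisms of `τ`. Its dimension is therefore the character inner product `⟨χ, χ⟩` of
`τ`, which can be computed after complexifying: there `χ = s ∑ χ_{ρ_i}`, and orthogonality of the
irreducible characters gives `dim_ℚ 𝔻 = |I| s²`. Since `dim_ℚ W = |I| s d`, the tower law
`dim_ℚ 𝔻 · dim_𝔻 W = dim_ℚ W` yields `s · dim_𝔻 W = d`.
-/

section Bridge

variable {V W : Type*} [AddCommGroup V] [Module k V] [AddCommGroup W] [Module k W]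

theorem IsIrred.isIrreducible {ρ : Representation k G V} (h : IsIrred ρ) : ρ.IsIrreducible := by
  obtain ⟨⟨v, hv⟩, hsub⟩ := h
  have : Nontrivial (Subrepresentation ρ) := ⟨⊥, ⊤, fun hbot => hv <| by
    have : v ∈ (⊤ : Subrepresentation ρ) := trivial
    rwa [← hbot] at this⟩
  refine ⟨fun U => ?_⟩
  rcases hsub U.toSubmodule fun g _ hv => U.apply_mem_toSubmodule g hv with h | h
  · exact Or.inl (Subrepresentation.toSubmodule_injective h)
  · exact Or.inr (Subrepresentation.toSubmodule_injective h)

theorem RepIso.nonempty_equiv {ρ : Representation k G V} {π : Representation k G W}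
    (h : RepIso ρ π) : Nonempty (ρ.Equiv π) :=
  let ⟨e, he⟩ := h
  ⟨.mk e fun g => LinearMap.ext (he g)⟩

theorem isEmpty_equiv_of_not_repIso {ρ : Representation k G V} {π : Representation k G W}
    (h : ¬ RepIso ρ π) : IsEmpty (ρ.Equiv π) :=
  ⟨fun e => h ⟨e.toLinearEquiv, fun g v => LinearMap.congr_fun (e.isIntertwining' g) v⟩⟩

end Bridge

section Commutant

variable {V : Type*} [AddCommGroup V] [Module k V] (ρ : Representation k G V)

theorem mem_centralizer_range_iff {f : Module.End k V} :
    f ∈ Subalgebra.centralizer k (Set.range ρ) ↔ ∀ g, f ∘ₗ ρ g = ρ g ∘ₗ f := by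
  simp [Subalgebra.mem_centralizer_iff, Module.End.mul_eq_comp, eq_comm]

def centralizerAlgEquiv :
    Subalgebra.centralizer k (Set.range ρ) ≃ₐ[k] ρ.IntertwiningMap ρ :=
  AlgEquiv.ofLinearEquiv
    { toFun a := ⟨a, (mem_centralizer_range_iff ρ).1 a.2⟩
      invFun f := ⟨f.toLinearMap, (mem_centralizer_range_iff ρ).2 f.isIntertwining'⟩
      map_add' _ _ := rfl
      map_smul' _ _ := rfl
      left_inv _ := rfl
      right_inv _ := rfl }
    rfl (fun _ _ => rfl)

variable [ρ.IsIrreducible]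

theorem isUnit_or_eq_zero_of_mem_centralizer (a : Subalgebra.centralizer k (Set.range ρ)) :
    IsUnit a ∨ a = 0 := by
  classical
  let e := (centralizerAlgEquiv ρ).trans (Representation.IntertwiningMap.equivAlgEnd ρ)
  rw [← isUnit_map_iff e, ← e.map_eq_zero_iff]
  exact (em' (e a = 0)).imp_left isUnit_iff_ne_zero.2

noncomputable abbrev centralizerDivisionRing :
    DivisionRing (Subalgebra.centralizer k (Set.range ρ)) :=
  have : Nontrivial (Subalgebra.centralizer k (Set.range ρ)) := by
    classical
    exact ((centralizerAlgEquiv ρ).trans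
      (Representation.IntertwiningMap.equivAlgEnd ρ)).toEquiv.nontrivial
  DivisionRing.ofIsUnitOrEqZero (isUnit_or_eq_zero_of_mem_centralizer ρ)

end Commutant

section Character

theorem trace_pi_comp_proj {R : Type*} [CommRing R] {ι : Type*} [Fintype ι] [DecidableEq ι]
    {M : ι → Type*} [∀ i, AddCommGroup (M i)] [∀ i, Module R (M i)] [∀ i, Module.Free R (M i)]
    [∀ i, Module.Finite R (M i)] (f : ∀ i, Module.End R (M i)) :
    LinearMap.trace R (∀ i, M i) (LinearMap.pi fun i => f i ∘ₗ LinearMap.proj i) =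
      ∑ i, LinearMap.trace R (M i) (f i) := by
  have hsum : (LinearMap.pi fun i => f i ∘ₗ LinearMap.proj i) =
      ∑ i, LinearMap.single R M i ∘ₗ (f i ∘ₗ LinearMap.proj i) := by
    ext v j
    simp
  rw [hsum, map_sum]
  refine Finset.sum_congr rfl fun i _ => ?_
  rw [LinearMap.trace_comp_comm', LinearMap.comp_assoc, LinearMap.proj_comp_single_same,
    LinearMap.comp_id]

theorem char_piRep {ι : Type*} [Fintype ι] {M : ι → Type*}
    [∀ i, AddCommGroup (M i)] [∀ i, Module k (M i)] [∀ i, FiniteDimensional k (M i)]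
    (ρ : ∀ i, Representation k G (M i)) (g : G) :
    (piRep ρ).character g = ∑ i, (ρ i).character g := by
  classical
  exact trace_pi_comp_proj fun i => ρ i g

theorem char_complexify {W : Type*} [AddCommGroup W] [Module ℚ W] [FiniteDimensional ℚ W]
    (τ : Representation ℚ G W) (g : G) :
    (complexify τ).character g = τ.character g :=
  LinearMap.trace_baseChange (τ g) ℂ

theorem cast_finrank_intertwiningMap_self_eq_complexify [Fintype G] {W : Type*} [AddCommGroup W]
    [Module ℚ W] [FiniteDimensional ℚ W] (τ : Representation ℚ G W) :
    (Module.finrank ℚ (τ.IntertwiningMap τ) : ℂ) =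
      (Nat.card G : ℂ)⁻¹ * ∑ g, (complexify τ).character g * (complexify τ).character g⁻¹ := by
  have : Invertible (Nat.card G : ℚ) := invertibleOfNonzero (Nat.cast_ne_zero.2 Nat.card_pos.ne')
  rw [← Rat.cast_natCast, ← τ.card_inv_mul_sum_char_mul_char_eq_finrank τ]
  push_cast [char_complexify]
  rfl

theorem card_inv_mul_sum_char_mul_char_piRep_isotypic [Fintype G] [Invertible (Nat.card G : k)]
    [IsAlgClosed k] {ι : Type*} [Fintype ι] {M : ι → Type*}
    [∀ i, AddCommGroup (M i)] [∀ i, Module k (M i)] [∀ i, FiniteDimensional k (M i)]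
    (ρ : ∀ i, Representation k G (M i)) [∀ i, (ρ i).IsIrreducible]
    (hdiff : ∀ i j, i ≠ j → IsEmpty ((ρ i).Equiv (ρ j))) (m : ℕ) :
    (Nat.card G : k)⁻¹ * ∑ g, (piRep fun p : ι × Fin m => ρ p.1).character g *
      (piRep fun p : ι × Fin m => ρ p.1).character g⁻¹ = Fintype.card ι * m * m := by
  classical
  have horth : ∀ i j, (Nat.card G : k)⁻¹ * ∑ g, (ρ i).character g * (ρ j).character g⁻¹ =
      if i = j then 1 else 0 := by
    intro i j
    rw [Representation.char_orthonormal]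
    by_cases h : i = j
    · subst h
      simpa using ⟨Representation.Equiv.refl (ρ i)⟩
    · simp [h, not_nonempty_iff.2 (hdiff j i (Ne.symm h))]
  have hχ : ∀ g, (piRep fun p : ι × Fin m => ρ p.1).character g =
      m * ∑ i, (ρ i).character g := by
    intro g
    rw [char_piRep, Finset.mul_sum]
    exact (Fintype.sum_prod_type' fun i (_ : Fin m) => (ρ i).character g).trans (by simp)
  calc _ = (m * m : k) * ∑ i, ∑ j,
        (Nat.card G : k)⁻¹ * ∑ g, (ρ j).character g * (ρ i).character g⁻¹ := by
        simp only [hχ, Finset.mul_sum, Finset.sum_mul]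
        rw [Finset.sum_comm]
        refine Finset.sum_congr rfl fun i _ => ?_
        rw [Finset.sum_comm]
        refine Finset.sum_congr rfl fun j _ => ?_
        refine Finset.sum_congr rfl fun g _ => ?_
        ring
    _ = Fintype.card ι * m * m := by
        simp only [horth]
        simp
        ring

end Character

/-- in the situation of the previous statement, `W` has a basis of
cardinality `d/s` over the division algebra `𝔻 = End_G(W)`; in particular, the Schur
index `s` divides `d`. -/
theorem statement_11 {G : Type*} [Group G] [Fintype G]
    {W : Type*} [AddCommGroup W] [Module ℚ W] [FiniteDimensional ℚ W]
    (τ : Representation ℚ G W) (hτ : IsIrred τ)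
    {ι : Type} [Fintype ι] (Vi : ι → CxRep G) (d s : ℕ) (hs : 0 < s)
    (hirr : ∀ i, IsIrred (Vi i).rep)
    (hdiff : ∀ i j, i ≠ j → ¬ RepIso (Vi i).rep (Vi j).rep)
    (hdim : ∀ i, Module.finrank ℂ (Vi i).carrier = d)
    (hdec : RepIso (complexify τ) (piRep fun p : ι × Fin s => (Vi p.1).rep)) :
    s ∣ d ∧
    ∃ b : Fin (d / s) → W,
      (∀ w : W, ∃ c : Fin (d / s) →
          Subalgebra.centralizer ℚ (Set.range ⇑τ : Set (Module.End ℚ W)),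
        w = ∑ i, (c i : Module.End ℚ W) (b i)) ∧
      (∀ c : Fin (d / s) →
          Subalgebra.centralizer ℚ (Set.range ⇑τ : Set (Module.End ℚ W)),
        (∑ i, (c i : Module.End ℚ W) (b i)) = 0 → ∀ i, c i = 0) := by
  have := hτ.isIrreducible
  have := fun i => (hirr i).isIrreducible
  have : Invertible (Nat.card G : ℂ) := invertibleOfNonzero (Nat.cast_ne_zero.2 Nat.card_pos.ne')
  let D := Subalgebra.centralizer ℚ (Set.range ⇑τ : Set (Module.End ℚ W))
  let := centralizerDivisionRing τ
  have : Module.Finite D W := Module.Finite.of_restrictScalars_finite ℚ D W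
  have hD : Module.finrank ℚ D = Fintype.card ι * s * s := by
    have := card_inv_mul_sum_char_mul_char_piRep_isotypic (fun i => (Vi i).rep)
      (fun i j h => isEmpty_equiv_of_not_repIso (hdiff i j h)) s
    rw [← Representation.char_iso hdec.nonempty_equiv.some,
      ← cast_finrank_intertwiningMap_self_eq_complexify] at this
    rw [(centralizerAlgEquiv τ).toLinearEquiv.finrank_eq]
    exact_mod_cast this
  have hW : Module.finrank ℚ W = Fintype.card ι * s * d := by
    obtain ⟨e, -⟩ := hdec
    rw [← Module.finrank_baseChange (R := ℂ) (S := ℚ), e.finrank_eq, Module.finrank_pi_fintype]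
    simp [hdim]
  have hrank : s * Module.finrank D W = d := by
    have : Nontrivial W := nontrivial_of_ne _ _ hτ.1.choose_spec
    have hpos : 0 < Fintype.card ι * s := Nat.pos_of_mul_pos_right (hW ▸ Module.finrank_pos)
    refine Nat.eq_of_mul_eq_mul_left hpos ?_
    rw [← mul_assoc, ← hD, Module.finrank_mul_finrank, hW]
  let b := Module.finBasisOfFinrankEq D W (Nat.eq_div_of_mul_eq_right hs.ne' hrank)
  exact ⟨⟨_, hrank.symm⟩, b, fun w => ⟨b.repr w, (b.sum_repr w).symm⟩,
    fun c h => Fintype.linearIndependent_iff.mp b.linearIndependent c h⟩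

end Paper
end

section
/- Let G be a finite group, H a normal subgroup of G, and V, V' finite-dimensional representations of G over ℚ. Assume that every irreducible ℚ-representation of G that occurs with positive multiplicity in both V and V' contains H in its kernel. Then (V ⊗ V')^G = (V^H ⊗ V'^H)^G; that is, the natural inclusion of the G-invariants of V^H ⊗ V'^H into the G-invariants of V ⊗ V' is an isomorphism. -/
open scoped TensorProduct

namespace Paper

variable {k : Type*} [Field k] {G : Type*} [Group G]

/-!
Let `p` be the `G`-equivariant projection of `V` onto `V^H` obtained by averaging over `H`, and
view an invariant `x ∈ V ⊗ V'` as the equivariant map `V'^* → V` contracting the second factor.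
For `y = x - (p ⊗ 1) x` this map lands in `ker p`. If `y ≠ 0`, its image contains an irreducible
subrepresentation `τ` with `τ ∩ V^H = 0`. The adjoint of the map with respect to a `G`-invariant
positive definite form on `V` (which exists over `ℚ`) is injective on that image, so `τ` also
occurs in `V'`; hence `H` acts trivially on `τ`, i.e. `τ ⊆ V^H`, a contradiction. Thus
`(p ⊗ 1) x = x`, symmetrically `(1 ⊗ p') x = x`, and `x` lies in `V^H ⊗ V'^H`.
-/

section InvariantForm

variable [LinearOrder k] [IsStrictOrderedRing k] [Fintype G]
  {V : Type*} [AddCommGroup V] [Module k V] [FiniteDimensional k V]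

theorem exists_posDef_invariant_bilinForm (ρ : Representation k G V) :
    ∃ B : LinearMap.BilinForm k V, (∀ v, v ≠ 0 → 0 < B v v) ∧
      ∀ g v w, B (ρ g v) (ρ g w) = B v w := by
  let e := (Module.finBasis k V).equivFun
  let B : LinearMap.BilinForm k V :=
    ∑ g : G, (dotProductBilin k k).compl₁₂ (e.toLinearMap ∘ₗ ρ g) (e.toLinearMap ∘ₗ ρ g)
  have hB : ∀ v w, B v w = ∑ g : G, e (ρ g v) ⬝ᵥ e (ρ g w) := by
    intro v w
    simp [B]
  refine ⟨B, fun v hv => ?_, fun g v w => ?_⟩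
  · have hself : ∀ u : V, 0 ≤ e u ⬝ᵥ e u := fun u =>
      Finset.sum_nonneg fun i _ => mul_self_nonneg (e u i)
    have hv' : e v ⬝ᵥ e v ≠ 0 := dotProduct_self_eq_zero.not.mpr (by simpa using hv)
    rw [hB]
    exact Finset.sum_pos' (fun g _ => hself _)
      ⟨1, Finset.mem_univ _, by simpa using (hself v).lt_of_ne' hv'⟩
  · simp only [hB, ← Module.End.mul_apply, ← map_mul]
    exact Fintype.sum_equiv (Equiv.mulRight g) _ _ fun _ => rfl

end InvariantForm

section Slice

variable {V W : Type*} [AddCommGroup V] [Module k V] [AddCommGroup W] [Module k W]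
  [FiniteDimensional k W]

variable (k V W) in
noncomputable def sliceEquiv : V ⊗[k] W ≃ₗ[k] (Module.Dual k W →ₗ[k] V) :=
  TensorProduct.comm k V W ≪≫ₗ LinearEquiv.rTensor V (Module.evalEquiv k W) ≪≫ₗ
    dualTensorHomEquiv k (Module.Dual k W) V

@[simp]
theorem sliceEquiv_tmul (v : V) (w : W) (ℓ : Module.Dual k W) :
    sliceEquiv k V W (v ⊗ₜ w) ℓ = ℓ w • v := by
  simp [sliceEquiv]

theorem sliceEquiv_map (f : V →ₗ[k] V) (f' : W →ₗ[k] W) (x : V ⊗[k] W)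
    (ℓ : Module.Dual k W) :
    sliceEquiv k V W (TensorProduct.map f f' x) ℓ = f (sliceEquiv k V W x (ℓ ∘ₗ f')) := by
  induction x using TensorProduct.induction_on with
  | zero => simp
  | tmul v w => simp
  | add x y hx hy => simp [hx, hy]

theorem apply_sliceEquiv_comm [FiniteDimensional k V] (B : LinearMap.BilinForm k V)
    (x : V ⊗[k] W) (u : V) (ℓ : Module.Dual k W) :
    B u (sliceEquiv k V W x ℓ) = ℓ (sliceEquiv k W V (TensorProduct.comm k V W x) (B u)) := by
  induction x using TensorProduct.induction_on with
  | zero => simp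
  | tmul v w => simp [mul_comm]
  | add x y hx hy => simp [hx, hy]

end Slice

section SliceInvariants

variable {V W : Type*} [AddCommGroup V] [Module k V] [AddCommGroup W] [Module k W]
  {ρ : Representation k G V} {ρ' : Representation k G W}

theorem comm_mem_invariants_tprod {x : V ⊗[k] W} (hx : x ∈ (ρ.tprod ρ').invariants) :
    TensorProduct.comm k V W x ∈ (ρ'.tprod ρ).invariants := fun g => by
  rw [Representation.tprod_apply, TensorProduct.map_comm, ← Representation.tprod_apply, hx g]

variable [FiniteDimensional k W]

theorem rep_sliceEquiv_of_mem_invariants {x : V ⊗[k] W} (hx : x ∈ (ρ.tprod ρ').invariants)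
    (g : G) (ℓ : Module.Dual k W) :
    ρ g (sliceEquiv k V W x ℓ) = sliceEquiv k V W x (ℓ ∘ₗ ρ' g⁻¹) := by
  conv_rhs => rw [← hx g, Representation.tprod_apply, sliceEquiv_map]
  rw [LinearMap.comp_assoc, ← Module.End.mul_eq_comp, ← map_mul, inv_mul_cancel, map_one,
    Module.End.one_eq_id, LinearMap.comp_id]

theorem isSubrep_range_sliceEquiv {x : V ⊗[k] W} (hx : x ∈ (ρ.tprod ρ').invariants) :
    IsSubrep ρ (LinearMap.range (sliceEquiv k V W x)) := by
  rintro g _ ⟨ℓ, rfl⟩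
  exact ⟨_, (rep_sliceEquiv_of_mem_invariants hx g ℓ).symm⟩

end SliceInvariants

section Occurs

variable [LinearOrder k] [IsStrictOrderedRing k] [Fintype G]
  {V W U : Type*} [AddCommGroup V] [Module k V] [FiniteDimensional k V]
  [AddCommGroup W] [Module k W] [FiniteDimensional k W] [AddCommGroup U] [Module k U]
  {ρ : Representation k G V} {ρ' : Representation k G W}

theorem occurs_of_range_le_range_sliceEquiv {x : V ⊗[k] W}
    (hx : x ∈ (ρ.tprod ρ').invariants) {σ : Representation k G U} (j : U →ₗ[k] V)
    (hj : j ≠ 0) (hjσ : ∀ g u, j (σ g u) = ρ g (j u))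
    (hle : LinearMap.range j ≤ LinearMap.range (sliceEquiv k V W x)) : Occurs σ ρ' := by
  obtain ⟨B, hBpos, hBinv⟩ := exists_posDef_invariant_bilinForm ρ
  -- `ψ` is the adjoint of `sliceEquiv x` with respect to `B`
  let ψ : V →ₗ[k] W := sliceEquiv k W V (TensorProduct.comm k V W x) ∘ₗ B
  have hBρ : ∀ g v, B (ρ g v) = B v ∘ₗ ρ g⁻¹ := fun g v => LinearMap.ext fun u => by
    rw [LinearMap.comp_apply, ← hBinv g v, ← Module.End.mul_apply, ← map_mul, mul_inv_cancel,
      map_one, Module.End.one_apply]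
  have hψ : ∀ g v, ψ (ρ g v) = ρ' g (ψ v) := fun g v => by
    simp only [ψ, LinearMap.comp_apply, hBρ,
      rep_sliceEquiv_of_mem_invariants (comm_mem_invariants_tprod hx)]
  have hψ_ne : ∀ u ∈ LinearMap.range (sliceEquiv k V W x), u ≠ 0 → ψ u ≠ 0 := by
    rintro _ ⟨ℓ, rfl⟩ hu hψu
    have h := apply_sliceEquiv_comm B x (sliceEquiv k V W x ℓ) ℓ
    rw [show sliceEquiv k W V _ (B _) = 0 from hψu, map_zero] at h
    exact (hBpos _ hu).ne' h
  obtain ⟨u, hu⟩ : ∃ u, j u ≠ 0 := by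
    by_contra! h
    exact hj (LinearMap.ext h)
  refine ⟨ψ ∘ₗ j, fun h0 => hψ_ne (j u) (hle ⟨u, rfl⟩) hu ?_, fun g u => by simp [hjσ, hψ]⟩
  simpa using LinearMap.congr_fun h0 u

end Occurs

section Irreducible

variable {V W : Type*} [AddCommGroup V] [Module k V] [AddCommGroup W] [Module k W]
  {ρ : Representation k G V}

theorem IsIrred.of_linearEquiv {π : Representation k G W} (e : V ≃ₗ[k] W)
    (he : ∀ g v, e (ρ g v) = π g (e v)) (hπ : IsIrred π) : IsIrred ρ := by
  obtain ⟨⟨w, hw⟩, hπU⟩ := hπ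
  refine ⟨⟨e.symm w, by simpa using hw⟩, fun U hU => ?_⟩
  have hUe : IsSubrep π (U.map (e : V →ₗ[k] W)) := by
    rintro g _ ⟨v, hv, rfl⟩
    exact ⟨ρ g v, hU g v hv, he g v⟩
  simpa using hπU _ hUe

theorem exists_isIrred_subRep_le [FiniteDimensional k V] {U : Submodule k V}
    (hU : IsSubrep ρ U) (hU0 : U ≠ ⊥) :
    ∃ (τ : Submodule k V) (hτ : IsSubrep ρ τ), τ ≤ U ∧ IsIrred (subRep ρ τ hτ) := by
  obtain ⟨τ, ⟨hτ, hτ0, hτU⟩, hmin⟩ := wellFounded_lt.has_min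
    {τ : Submodule k V | IsSubrep ρ τ ∧ τ ≠ ⊥ ∧ τ ≤ U} ⟨U, hU, hU0, le_rfl⟩
  obtain ⟨u, hu, hu0⟩ := Submodule.exists_mem_ne_zero_of_ne_bot hτ0
  refine ⟨τ, hτ, hτU, ⟨⟨u, hu⟩, by simpa using hu0⟩, fun Z hZ => ?_⟩
  have hZτ : IsSubrep ρ (Z.map τ.subtype) := by
    rintro g _ ⟨z, hz, rfl⟩
    exact ⟨subRep ρ τ hτ g z, hZ g z hz, rfl⟩
  have hinj := Submodule.map_injective_of_injective τ.injective_subtype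
  by_cases hZ0 : Z = ⊥
  · exact Or.inl hZ0
  · refine Or.inr (hinj ?_)
    rw [Submodule.map_subtype_top]
    refine (Submodule.map_subtype_le τ Z).eq_of_not_lt fun hlt => hmin _ ⟨hZτ, ?_, ?_⟩ hlt
    · rwa [Ne, ← Submodule.map_bot τ.subtype, hinj.eq_iff]
    · exact (Submodule.map_subtype_le τ Z).trans hτU

end Irreducible

section RationalRep

variable {U V : Type*} [AddCommGroup U] [Module ℚ U] [FiniteDimensional ℚ U]
  [AddCommGroup V] [Module ℚ V] [FiniteDimensional ℚ V]

-- `QRep` lives in `Type`, so a representation on `U` is transported to coordinates `Fin n → ℚ`.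
theorem exists_qRep_linearEquiv (σ : Representation ℚ G U) :
    ∃ (R : QRep G) (e : R.carrier ≃ₗ[ℚ] U), ∀ g v, e (R.rep g v) = σ g (e v) := by
  let e := (Module.finBasis ℚ U).equivFun.symm
  refine ⟨⟨_, (e.symm.conjAlgEquiv ℚ : Module.End ℚ U →* _).comp σ⟩, e, fun g v => ?_⟩
  simp [LinearEquiv.conjAlgEquiv_apply]

theorem exists_isIrred_qRep_le {ρ : Representation ℚ G V} {W : Submodule ℚ V}
    (hW : IsSubrep ρ W) (hW0 : W ≠ ⊥) :
    ∃ R : QRep G, IsIrred R.rep ∧ ∃ j : R.carrier →ₗ[ℚ] V,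
      j ≠ 0 ∧ (∀ g v, j (R.rep g v) = ρ g (j v)) ∧ LinearMap.range j ≤ W := by
  obtain ⟨τ, hτ, hτW, hirr⟩ := exists_isIrred_subRep_le hW hW0
  obtain ⟨R, e, he⟩ := exists_qRep_linearEquiv (subRep ρ τ hτ)
  obtain ⟨w, hw⟩ := hirr.1
  refine ⟨R, hirr.of_linearEquiv e he, τ.subtype ∘ₗ e, fun h0 => hw ?_, fun g v => ?_, ?_⟩
  · simpa using LinearMap.congr_fun h0 (e.symm w)
  · exact congrArg Subtype.val (he g v)
  · exact (LinearMap.range_comp_le_range _ _).trans (by rwa [Submodule.range_subtype])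

end RationalRep

section Projection

variable {V : Type*} [AddCommGroup V] [Module k V]

theorem exists_isProj_fixSub_commute [Finite G] [CharZero k] (ρ : Representation k G V)
    (H : Subgroup G) [H.Normal] :
    ∃ p : Module.End k V, LinearMap.IsProj (fixSub ρ H) p ∧ ∀ g, Commute (ρ g) p := by
  have : Fintype H := Fintype.ofFinite H
  have : Invertible (Fintype.card H : k) :=
    invertibleOfNonzero (Nat.cast_ne_zero.mpr Fintype.card_ne_zero)
  let σ : Representation k H V := ρ.comp H.subtype
  refine ⟨σ.averageMap, ⟨fun v h hh => σ.averageMap_invariant v ⟨h, hh⟩,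
    fun v hv => σ.averageMap_id v fun h => hv h h.2⟩, fun g => ?_⟩
  simp only [Commute, SemiconjBy, Representation.averageMap, GroupAlgebra.average, map_smul,
    map_sum, MonoidAlgebra.of_apply, Representation.asAlgebraHom_single_one, mul_smul_comm,
    smul_mul_assoc, Finset.mul_sum, Finset.sum_mul]
  congr 1
  refine Fintype.sum_equiv (MulAut.conjNormal g).toEquiv _ _ fun h => ?_
  simp only [σ, MonoidHom.comp_apply, H.coe_subtype, MulEquiv.toEquiv_eq_coe, EquivLike.coe_coe,
    MulAut.conjNormal_apply, ← map_mul]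
  group

theorem rTensor_mem_invariants {W : Type*} [AddCommGroup W] [Module k W]
    {ρ : Representation k G V} {ρ' : Representation k G W} {p : Module.End k V}
    (hpρ : ∀ g, Commute (ρ g) p)
    {x : V ⊗[k] W} (hx : x ∈ (ρ.tprod ρ').invariants) :
    p.rTensor W x ∈ (ρ.tprod ρ').invariants := fun g => by
  rw [Representation.tprod_apply, LinearMap.rTensor, TensorProduct.map_map,
    ← Module.End.mul_eq_comp, (hpρ g).eq, Module.End.mul_eq_comp, LinearMap.comp_id,
    ← LinearMap.id_comp (ρ' g), ← TensorProduct.map_map, ← Representation.tprod_apply, hx g]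

end Projection

theorem map_invariants_eq_of_injective {U W : Type*} [AddCommGroup U] [Module k U]
    [AddCommGroup W] [Module k W] {σ : Representation k G U} {π : Representation k G W}
    (ι : U →ₗ[k] W) (hι : Function.Injective ι) (hισ : ∀ g, π g ∘ₗ ι = ι ∘ₗ σ g) :
    σ.invariants.map ι = π.invariants ⊓ LinearMap.range ι := by
  ext w
  constructor
  · rintro ⟨u, hu, rfl⟩
    exact ⟨fun g => by rw [← LinearMap.comp_apply, hισ, LinearMap.comp_apply, hu g], u, rfl⟩
  · rintro ⟨hw, u, rfl⟩
    refine ⟨u, fun g => hι ?_, rfl⟩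
    rw [← LinearMap.comp_apply ι, ← hισ, LinearMap.comp_apply, hw g]

section CommonConstituents

variable {V W : Type*} [AddCommGroup V] [Module ℚ V] [AddCommGroup W] [Module ℚ W]

def IsTrivialOnCommonIrreds (H : Subgroup G) (ρ : Representation ℚ G V)
    (ρ' : Representation ℚ G W) : Prop :=
  ∀ R : QRep G, IsIrred R.rep → Occurs R.rep ρ → Occurs R.rep ρ' → ∀ h ∈ H, R.rep h = 1

variable {H : Subgroup G} {ρ : Representation ℚ G V} {ρ' : Representation ℚ G W}

theorem IsTrivialOnCommonIrreds.symm (hH : IsTrivialOnCommonIrreds H ρ ρ') :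
    IsTrivialOnCommonIrreds H ρ' ρ :=
  fun R hR hρ' hρ => hH R hR hρ hρ'

variable [Fintype G] [FiniteDimensional ℚ V] [FiniteDimensional ℚ W]

theorem eq_zero_of_disjoint_range_sliceEquiv (hH : IsTrivialOnCommonIrreds H ρ ρ')
    {x : V ⊗[ℚ] W} (hx : x ∈ (ρ.tprod ρ').invariants)
    (hdisj : Disjoint (LinearMap.range (sliceEquiv ℚ V W x)) (fixSub ρ H)) : x = 0 := by
  by_contra hx0
  have hrange : LinearMap.range (sliceEquiv ℚ V W x) ≠ ⊥ := by
    simpa [LinearMap.range_eq_bot] using hx0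
  obtain ⟨R, hR, j, hj0, hjρ, hjx⟩ :=
    exists_isIrred_qRep_le (isSubrep_range_sliceEquiv hx) hrange
  have hRH := hH R hR ⟨j, hj0, hjρ⟩ (occurs_of_range_le_range_sliceEquiv hx j hj0 hjρ hjx)
  have hjH : LinearMap.range j ≤ fixSub ρ H := by
    rintro _ ⟨v, rfl⟩ h hh
    rw [← hjρ, hRH h hh, Module.End.one_apply]
  exact hj0 (LinearMap.range_eq_bot.mp (le_bot_iff.mp (hdisj hjx hjH)))

theorem rTensor_eq_self_of_isProj (hH : IsTrivialOnCommonIrreds H ρ ρ') {p : Module.End ℚ V}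
    (hp : LinearMap.IsProj (fixSub ρ H) p) (hpρ : ∀ g, Commute (ρ g) p)
    {x : V ⊗[ℚ] W} (hx : x ∈ (ρ.tprod ρ').invariants) : p.rTensor W x = x := by
  have hy := Submodule.sub_mem _ hx (rTensor_mem_invariants hpρ hx)
  have hdisj :
      Disjoint (LinearMap.range (sliceEquiv ℚ V W (x - p.rTensor W x))) (fixSub ρ H) := by
    rw [Submodule.disjoint_def]
    rintro _ ⟨ℓ, rfl⟩ hu
    have hu' : sliceEquiv ℚ V W (x - p.rTensor W x) ℓ =
        sliceEquiv ℚ V W x ℓ - p (sliceEquiv ℚ V W x ℓ) := by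
      rw [map_sub, LinearMap.sub_apply, LinearMap.rTensor, sliceEquiv_map, LinearMap.comp_id]
    rw [← hp.map_id _ hu, hu', map_sub, hp.map_id _ (hp.map_mem _), sub_self]
  exact (sub_eq_zero.mp (eq_zero_of_disjoint_range_sliceEquiv hH hy hdisj)).symm

theorem lTensor_eq_self_of_isProj (hH : IsTrivialOnCommonIrreds H ρ ρ') {p : Module.End ℚ W}
    (hp : LinearMap.IsProj (fixSub ρ' H) p) (hpρ : ∀ g, Commute (ρ' g) p)
    {x : V ⊗[ℚ] W} (hx : x ∈ (ρ.tprod ρ').invariants) : p.lTensor V x = x := by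
  apply (TensorProduct.comm ℚ V W).injective
  rw [LinearMap.lTensor, ← TensorProduct.map_comm]
  exact rTensor_eq_self_of_isProj hH.symm hp hpρ (comm_mem_invariants_tprod hx)

end CommonConstituents

/-- if `H ⊴ G` and every irreducible rational representation occurring in
both `V` and `V\'` contains `H` in its kernel, then `(V ⊗ V\')^G = (V^H ⊗ V\'^H)^G`: the
natural inclusion of the `G`-invariants of `V^H ⊗ V\'^H` into those of `V ⊗ V\'` is an
isomorphism (its image is all of `(V ⊗ V\')^G`). -/
theorem statement_18 {G : Type*} [Group G] [Fintype G]
    (H : Subgroup G) [H.Normal]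
    {V V' : Type*} [AddCommGroup V] [Module ℚ V] [FiniteDimensional ℚ V]
    [AddCommGroup V'] [Module ℚ V'] [FiniteDimensional ℚ V']
    (ρ : Representation ℚ G V) (ρ' : Representation ℚ G V')
    (hker : ∀ R : QRep G, IsIrred R.rep → Occurs R.rep ρ → Occurs R.rep ρ' →
      ∀ h ∈ H, R.rep h = 1) :
    Submodule.map
        (TensorProduct.map (fixSub ρ H).subtype (fixSub ρ' H).subtype)
        (((fixRep ρ H).tprod (fixRep ρ' H)).invariants) =
      (ρ.tprod ρ').invariants := by
  rw [map_invariants_eq_of_injective (π := ρ.tprod ρ') _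
    (Module.Flat.tensorProduct_mapIncl_injective_of_right _ _)
    (fun g => TensorProduct.ext' fun _ _ => rfl), inf_eq_left]
  intro x hx
  obtain ⟨p, hp, hpρ⟩ := exists_isProj_fixSub_commute ρ H
  obtain ⟨p', hp', hpρ'⟩ := exists_isProj_fixSub_commute ρ' H
  have hx' : TensorProduct.map p p' x = x := by
    rw [← LinearMap.rTensor_comp_lTensor, LinearMap.comp_apply,
      lTensor_eq_self_of_isProj hker hp' hpρ' hx, rTensor_eq_self_of_isProj hker hp hpρ hx]
  refine hx' ▸
    ⟨TensorProduct.map (p.codRestrict _ hp.map_mem) (p'.codRestrict _ hp'.map_mem) x, ?_⟩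
  rw [← LinearMap.comp_apply, ← TensorProduct.map_comp]
  rfl

end Paper
end
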